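/- Fix 0 ≤ s < 1 with √(1−s²) > (n−1)/n, set κ := n√(1−s²) − (n−1) ∈ (0,1], and let A_s = {(x₁,x₂,x₃) ∈ S² : x₃ ≤ −√(1−s²)}. Suppose the initial sphere points of a continued trajectory of the planar point-vortex gradient flow satisfy P_i(0) ∈ A_s for all i = 1,…,2n. Then all vortices have been annihilated by the time T = ln(1/κ): every collision time of the continued trajectory is at most ln(1/κ), and no vortices remain after the last one. -/

import Mathlib

open Finset
open scoped Classical

noncomputable section

abbrev E2 := EuclideanSpace ℝ (Fin 2)
abbrev E3 := EuclideanSpace ℝ (Fin 3)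

/-- Velocity field of the planar point-vortex gradient flow. -/
def pvVel {N : ℕ} (d : Fin N → ℤ) (q : Fin N → E2) (i : Fin N) : E2 :=
  ((1 + ‖q i‖ ^ 2) ^ 2 / 2) •
    ((1 + ‖q i‖ ^ 2)⁻¹ • q i +
      (d i : ℝ) • ∑ j ∈ univ.erase i, (d j : ℝ) • (‖q i - q j‖ ^ 2)⁻¹ • (q i - q j))

/-- Inverse stereographic projection: the sphere point corresponding to `p ∈ ℝ²`. -/
def sph (p : E2) : E3 :=
  (WithLp.equiv 2 (Fin 3 → ℝ)).symm
    ![2 * p 0 / (1 + ‖p‖ ^ 2), 2 * p 1 / (1 + ‖p‖ ^ 2), (‖p‖ ^ 2 - 1) / (1 + ‖p‖ ^ 2)]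
/-- A continued trajectory of the planar point-vortex gradient flow on `S²` (in
stereographic coordinates), starting from `2n` vortices of degrees `±1` summing to zero:
there are collision times `0 = T 0 < T 1 < ⋯ < T m`; on each interval
`[T k, T (k+1))` (and on `[T m, ∞)` for the last stage) the `N k` vortices solve the
point-vortex gradient flow with pairwise distinct positions, extending continuously to the
collision time; at each collision time the vortices are grouped into clusters by
coincidence of limit positions, some cluster has at least two vortices, every cluster has
total degree in `{-1,0,1}` (hypothesis (H)), clusters of total degree `0` are deleted and
clusters of total degree `±1` are replaced by a single vortex of that degree at the common
limit position (the cluster map is `cl`, sending each old vortex to its successor, or to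
`none` if its cluster is annihilated). -/
structure PVTrajectory (n : ℕ) where
  /-- number of collision times -/
  m : ℕ
  /-- `T 0 = 0` and `T 1 < ⋯ < T m` are the collision times -/
  T : ℕ → ℝ
  /-- number of vortices at stage `k` -/
  N : ℕ → ℕ
  /-- degrees of the stage-`k` vortices -/
  deg : (k : ℕ) → Fin (N k) → ℤ
  /-- positions of the stage-`k` vortices -/
  pos : (k : ℕ) → ℝ → Fin (N k) → E2
  /-- limit positions of the stage-`k` vortices as `t → T (k+1)⁻` -/
  lim : (k : ℕ) → Fin (N k) → E2
  /-- the cluster/successor map at the collision time `T (k+1)` -/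
  cl : (k : ℕ) → Fin (N k) → Option (Fin (N (k + 1)))
  T_zero : T 0 = 0
  T_mono : ∀ k < m, T k < T (k + 1)
  N_zero : N 0 = 2 * n
  deg_pm : ∀ k ≤ m, ∀ i, deg k i = 1 ∨ deg k i = -1
  deg_sum : ∀ k ≤ m, ∑ i, deg k i = 0
  distinct : ∀ k < m, ∀ t ∈ Set.Ico (T k) (T (k + 1)),
    ∀ i j : Fin (N k), i ≠ j → pos k t i ≠ pos k t j
  ode : ∀ k < m, ∀ t ∈ Set.Ico (T k) (T (k + 1)), ∀ i : Fin (N k),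
    HasDerivWithinAt (fun s => pos k s i)
      (pvVel (deg k) (fun j => pos k t j) i) (Set.Ico (T k) (T (k + 1))) t
  distinct_last : ∀ t ∈ Set.Ici (T m), ∀ i j : Fin (N m), i ≠ j → pos m t i ≠ pos m t j
  ode_last : ∀ t ∈ Set.Ici (T m), ∀ i : Fin (N m),
    HasDerivWithinAt (fun s => pos m s i)
      (pvVel (deg m) (fun j => pos m t j) i) (Set.Ici (T m)) t
  lim_spec : ∀ k < m, ∀ i : Fin (N k),
    Filter.Tendsto (fun s => pos k s i)
      (nhdsWithin (T (k + 1)) (Set.Iio (T (k + 1)))) (nhds (lim k i))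
  /-- at each collision time some cluster contains at least two vortices -/
  collide : ∀ k < m, ∃ i j : Fin (N k), i ≠ j ∧ lim k i = lim k j
  /-- hypothesis (H): every cluster has total degree in `{-1,0,1}` -/
  hypH : ∀ k < m, ∀ i : Fin (N k),
    (∑ j ∈ univ.filter fun j => lim k j = lim k i, deg k j) ∈ ({-1, 0, 1} : Set ℤ)
  /-- vortices in the same cluster have the same successor -/
  cl_resp : ∀ k < m, ∀ i j : Fin (N k), lim k i = lim k j → cl k i = cl k j
  /-- vortices with the same successor are in the same cluster -/
  cl_inj : ∀ k < m, ∀ i j : Fin (N k), ∀ v : Fin (N (k + 1)),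
    cl k i = some v → cl k j = some v → lim k i = lim k j
  /-- every stage-`(k+1)` vortex arises from a cluster -/
  cl_surj : ∀ k < m, ∀ v : Fin (N (k + 1)), ∃ i : Fin (N k), cl k i = some v
  /-- exactly the clusters of total degree `0` are annihilated -/
  cl_none : ∀ k < m, ∀ i : Fin (N k),
    cl k i = none ↔ (∑ j ∈ univ.filter fun j => lim k j = lim k i, deg k j) = 0
  /-- the successor vortex carries the total degree of its cluster -/
  cl_deg : ∀ k < m, ∀ i : Fin (N k), ∀ v : Fin (N (k + 1)), cl k i = some v →
    deg (k + 1) v = ∑ j ∈ univ.filter fun j => lim k j = lim k i, deg k j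
  /-- the successor vortex starts at the common limit position of its cluster -/
  cl_pos : ∀ k < m, ∀ i : Fin (N k), ∀ v : Fin (N (k + 1)), cl k i = some v →
    pos (k + 1) (T (k + 1)) v = lim k i

/-! The height `x₃ = (r² - 1)/(1 + r²)` of a vortex on the sphere changes at the rate
`4⟨p, ṗ⟩/(1 + r²)²`. Summed over all vortices, the pair interactions cancel down to
`Σ_{i ≠ j} dᵢdⱼ = (Σ dᵢ)² - Σ dᵢ² = -N`, so the total height `H` solves `Ḣ = H` on every stage.
Hence `e^{-t}(2 - N - H)` is nondecreasing along a stage with `N ≥ 2` vortices, and it does not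
decrease at a collision either: every surviving vortex sits where its cluster collapsed, and every
vanishing vortex had height `≥ -1`. Initially this quantity is at least `2κ`, while `H ≥ -N` bounds
it by `2e^{-t}`; so `e^t ≤ 1/κ` as long as vortices remain, which on the unbounded last stage
forces `N = 0`. -/

/-- The `x₃`-coordinate of `sph p`. -/
def sphHeight (p : E2) : ℝ := (‖p‖ ^ 2 - 1) / (1 + ‖p‖ ^ 2)

lemma neg_one_le_sphHeight (p : E2) : -1 ≤ sphHeight p := by
  rw [sphHeight, le_div_iff₀ (by positivity)]
  linarith [sq_nonneg ‖p‖]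

lemma continuous_sphHeight : Continuous sphHeight :=
  Continuous.div (by fun_prop) (by fun_prop) fun p => by positivity

lemma hasDerivWithinAt_sphHeight {f : ℝ → E2} {v : E2} {s : Set ℝ} {t : ℝ}
    (hf : HasDerivWithinAt f v s t) :
    HasDerivWithinAt (fun τ => sphHeight (f τ))
      (4 * inner ℝ (f t) v / (1 + ‖f t‖ ^ 2) ^ 2) s t := by
  have hsq := hf.norm_sq
  exact ((hsq.sub_const 1).div (hsq.const_add 1) (by positivity)).congr_deriv (by ring)

lemma inner_sub_add_inner_sub {F : Type*} [NormedAddCommGroup F] [InnerProductSpace ℝ F]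
    (a b : F) : inner ℝ a (a - b) + inner ℝ b (b - a) = ‖a - b‖ ^ 2 := by
  rw [← real_inner_self_eq_norm_sq, ← neg_sub a b, inner_neg_right, inner_sub_left]
  ring

section OffDiagonalSums

variable {ι : Type*} [Fintype ι] [DecidableEq ι]

lemma sum_sum_erase_comm {M : Type*} [AddCommMonoid M] (f : ι → ι → M) :
    ∑ i, ∑ j ∈ univ.erase i, f i j = ∑ i, ∑ j ∈ univ.erase i, f j i :=
  Finset.sum_comm' fun i j => by simp [ne_comm]

lemma two_mul_sum_sum_erase {R : Type*} [CommRing R] {g h : ι → ι → R}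
    (hgh : ∀ i j, i ≠ j → g i j + g j i = h i j) :
    2 * ∑ i, ∑ j ∈ univ.erase i, g i j = ∑ i, ∑ j ∈ univ.erase i, h i j := by
  rw [two_mul]
  nth_rewrite 2 [sum_sum_erase_comm]
  rw [← sum_add_distrib]
  refine sum_congr rfl fun i _ => ?_
  rw [← sum_add_distrib]
  exact sum_congr rfl fun j hj => hgh i j (ne_of_mem_erase hj).symm

lemma sum_sum_erase_mul {R : Type*} [CommRing R] (d : ι → R) :
    ∑ i, ∑ j ∈ univ.erase i, d i * d j = (∑ i, d i) ^ 2 - ∑ i, d i ^ 2 := by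
  simp_rw [← mul_sum, sum_erase_eq_sub (mem_univ _), mul_sub, sum_sub_distrib, ← sum_mul, sq]

end OffDiagonalSums

lemma height_rate_pvVel {N : ℕ} (d : Fin N → ℤ) (q : Fin N → E2) (i : Fin N) :
    4 * inner ℝ (q i) (pvVel d q i) / (1 + ‖q i‖ ^ 2) ^ 2 =
      1 + sphHeight (q i) + 2 * ∑ j ∈ univ.erase i,
        (d i : ℝ) * d j * (inner ℝ (q i) (q i - q j) / ‖q i - q j‖ ^ 2) := by
  set B := ∑ j ∈ univ.erase i,
    (d i : ℝ) * d j * (inner ℝ (q i) (q i - q j) / ‖q i - q j‖ ^ 2)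
  have hB : inner ℝ (q i) (pvVel d q i) =
      (1 + ‖q i‖ ^ 2) ^ 2 / 2 * ((1 + ‖q i‖ ^ 2)⁻¹ * ‖q i‖ ^ 2 + B) := by
    simp only [B, pvVel, inner_smul_right, inner_add_right, inner_sum, real_inner_self_eq_norm_sq,
      mul_sum]
    congr 2
    exact sum_congr rfl fun j _ => by ring
  have h : 0 < 1 + ‖q i‖ ^ 2 := by positivity
  rw [hB, sphHeight]
  field_simp
  ring

lemma sum_height_rate_pvVel {N : ℕ} {d : Fin N → ℤ} {q : Fin N → E2}
    (hd : ∀ i, d i = 1 ∨ d i = -1) (hsum : ∑ i, d i = 0)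
    (hq : ∀ i j, i ≠ j → q i ≠ q j) :
    ∑ i, 4 * inner ℝ (q i) (pvVel d q i) / (1 + ‖q i‖ ^ 2) ^ 2 = ∑ i, sphHeight (q i) := by
  have hpair : ∀ i j, i ≠ j →
      (d i : ℝ) * d j * (inner ℝ (q i) (q i - q j) / ‖q i - q j‖ ^ 2) +
        (d j : ℝ) * d i * (inner ℝ (q j) (q j - q i) / ‖q j - q i‖ ^ 2) = d i * d j := by
    intro i j hij
    have hne : ‖q i - q j‖ ^ 2 ≠ 0 := by simpa [sub_eq_zero] using hq i j hij
    rw [norm_sub_rev (q j), mul_comm (d j : ℝ), ← mul_add, ← add_div, inner_sub_add_inner_sub,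
      div_self hne, mul_one]
  have hdeg : ∑ i, ∑ j ∈ univ.erase i, (d i : ℝ) * d j = -N := by
    have hsq : ∀ i, (d i : ℝ) ^ 2 = 1 := fun i => by rcases hd i with h | h <;> simp [h]
    rw [sum_sum_erase_mul, ← Int.cast_sum, hsum]
    simp [hsq]
  simp only [height_rate_pvVel, sum_add_distrib]
  rw [← mul_sum, two_mul_sum_sum_erase hpair, hdeg]
  simp only [sum_const, card_univ, Fintype.card_fin, nsmul_eq_mul, mul_one]
  ring

lemma eq_mul_exp_of_hasDerivWithinAt_self {f : ℝ → ℝ} {a x : ℝ} (hax : a ≤ x)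
    (hf : ∀ t ∈ Set.Icc a x, HasDerivWithinAt f (f t) (Set.Icc a x) t) :
    f x = f a * Real.exp (x - a) := by
  have hg : ∀ t ∈ Set.Icc a x,
      HasDerivWithinAt (fun τ => f τ * Real.exp (-τ)) 0 (Set.Icc a x) t := fun t ht =>
    ((hf t ht).mul (hasDerivAt_neg t).exp.hasDerivWithinAt).congr_deriv (by ring)
  have hconst : f x * Real.exp (-x) = f a * Real.exp (-a) :=
    constant_of_has_deriv_right_zero (fun t ht => (hg t ht).continuousWithinAt)
      (fun t ht => (hg t (Set.mem_Icc_of_Ico ht)).mono_of_mem_nhdsWithin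
        (Icc_mem_nhdsGE_of_mem ht)) x ⟨hax, le_rfl⟩
  have hexp : Real.exp (x - a) = Real.exp (-a) / Real.exp (-x) := by
    rw [← Real.exp_sub]
    ring_nf
  rw [hexp, ← mul_div_assoc, ← hconst, mul_div_cancel_right₀ _ (Real.exp_pos _).ne']

lemma sum_sphHeight_eq_mul_exp {N : ℕ} {d : Fin N → ℤ} {P : ℝ → Fin N → E2} {s : Set ℝ}
    {a x : ℝ} (hax : a ≤ x) (hsub : Set.Icc a x ⊆ s)
    (hd : ∀ i, d i = 1 ∨ d i = -1) (hsum : ∑ i, d i = 0)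
    (hdist : ∀ t ∈ s, ∀ i j, i ≠ j → P t i ≠ P t j)
    (hode : ∀ t ∈ s, ∀ i, HasDerivWithinAt (fun τ => P τ i) (pvVel d (P t) i) s t) :
    ∑ i, sphHeight (P x i) = (∑ i, sphHeight (P a i)) * Real.exp (x - a) := by
  refine eq_mul_exp_of_hasDerivWithinAt_self (f := fun t => ∑ i, sphHeight (P t i)) hax
    fun t ht => ?_
  rw [← sum_height_rate_pvVel hd hsum (hdist t (hsub ht))]
  exact HasDerivWithinAt.fun_sum fun i _ =>
    hasDerivWithinAt_sphHeight ((hode t (hsub ht) i).mono hsub)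

lemma sum_add_one_le_of_forall_exists_some {α β : Type*} [Fintype α] [Fintype β]
    {c : α → Option β} {L : α → ℝ} {P : β → ℝ} (hL : ∀ i, -1 ≤ L i)
    (hc : ∀ v, ∃ i, c i = some v) (hP : ∀ i v, c i = some v → P v = L i) :
    ∑ v, (P v + 1) ≤ ∑ i, (L i + 1) := by
  choose σ hσ using hc
  have hσinj : Function.Injective σ := fun v w h =>
    Option.some_injective _ ((hσ v).symm.trans (h ▸ hσ w))
  calc ∑ v, (P v + 1) = ∑ i ∈ univ.map ⟨σ, hσinj⟩, (L i + 1) := by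
        rw [sum_map]
        exact sum_congr rfl fun v _ => by rw [hP _ _ (hσ v)]; rfl
    _ ≤ ∑ i, (L i + 1) := sum_le_univ_sum_of_nonneg fun i => by linarith [hL i]

def lyap (N : ℕ) (H t : ℝ) : ℝ := Real.exp (-t) * (2 - N - H)

lemma lyap_le_lyap_mul_exp {N : ℕ} (hN : 2 ≤ N) (H : ℝ) {a x : ℝ} (hax : a ≤ x) :
    lyap N H a ≤ lyap N (H * Real.exp (x - a)) x := by
  have hexp : Real.exp (-x) ≤ Real.exp (-a) := Real.exp_le_exp.mpr (by linarith)
  have hN' : (2 : ℝ) - N ≤ 0 := by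
    have : (2 : ℝ) ≤ N := by exact_mod_cast hN
    linarith
  have hx : lyap N (H * Real.exp (x - a)) x = Real.exp (-x) * (2 - N) - H * Real.exp (-a) := by
    rw [lyap, Real.exp_sub, Real.exp_neg, Real.exp_neg]
    field_simp
  rw [hx, lyap]
  nlinarith [mul_le_mul_of_nonpos_right hexp hN']

lemma le_log_inv_of_le_lyap {N : ℕ} {H t κ : ℝ} (hκ : 0 < κ) (hH : -(N : ℝ) ≤ H)
    (h : 2 * κ ≤ lyap N H t) : t ≤ Real.log (1 / κ) := by
  have hκt : κ ≤ Real.exp (-t) := by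
    rw [lyap] at h
    nlinarith [Real.exp_pos (-t)]
  rw [one_div, Real.log_inv, le_neg]
  exact (Real.log_le_iff_le_exp hκ).mpr hκt

namespace PVTrajectory

variable {n : ℕ} (traj : PVTrajectory n)

def height (k : ℕ) (t : ℝ) : ℝ := ∑ i, sphHeight (traj.pos k t i)

def lyapAt (k : ℕ) : ℝ := lyap (traj.N k) (traj.height k (traj.T k)) (traj.T k)

lemma neg_N_le_height (k : ℕ) (t : ℝ) : -(traj.N k : ℝ) ≤ traj.height k t := by
  simpa [height] using sum_le_sum fun i (_ : i ∈ univ) => neg_one_le_sphHeight (traj.pos k t i)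

lemma height_eq_mul_exp {k : ℕ} (hk : k < traj.m) {t : ℝ}
    (ht : t ∈ Set.Ico (traj.T k) (traj.T (k + 1))) :
    traj.height k t = traj.height k (traj.T k) * Real.exp (t - traj.T k) :=
  sum_sphHeight_eq_mul_exp ht.1 (Set.Icc_subset_Ico_right ht.2)
    (traj.deg_pm k hk.le) (traj.deg_sum k hk.le) (traj.distinct k hk) (traj.ode k hk)

lemma height_last_eq_mul_exp {t : ℝ} (ht : traj.T traj.m ≤ t) :
    traj.height traj.m t =
      traj.height traj.m (traj.T traj.m) * Real.exp (t - traj.T traj.m) :=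
  sum_sphHeight_eq_mul_exp ht Set.Icc_subset_Ici_self (traj.deg_pm _ le_rfl)
    (traj.deg_sum _ le_rfl) traj.distinct_last traj.ode_last

lemma sum_sphHeight_lim {k : ℕ} (hk : k < traj.m) :
    ∑ i, sphHeight (traj.lim k i) =
      traj.height k (traj.T k) * Real.exp (traj.T (k + 1) - traj.T k) := by
  have hlim : Filter.Tendsto (traj.height k)
      (nhdsWithin (traj.T (k + 1)) (Set.Iio (traj.T (k + 1))))
      (nhds (∑ i, sphHeight (traj.lim k i))) :=
    tendsto_finsetSum _ fun i _ =>
      (continuous_sphHeight.tendsto _).comp (traj.lim_spec k hk i)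
  have hexp : Filter.Tendsto (fun t => traj.height k (traj.T k) * Real.exp (t - traj.T k))
      (nhdsWithin (traj.T (k + 1)) (Set.Iio (traj.T (k + 1))))
      (nhds (traj.height k (traj.T k) * Real.exp (traj.T (k + 1) - traj.T k))) :=
    ((by fun_prop : Continuous fun t => traj.height k (traj.T k) * Real.exp (t - traj.T k)).tendsto
      _).mono_left nhdsWithin_le_nhds
  refine tendsto_nhds_unique hlim (hexp.congr' ?_)
  filter_upwards [Ioo_mem_nhdsLT (traj.T_mono k hk)] with t ht
  exact (traj.height_eq_mul_exp hk ⟨ht.1.le, ht.2⟩).symm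

lemma height_succ_add_le {k : ℕ} (hk : k < traj.m) :
    traj.height (k + 1) (traj.T (k + 1)) + traj.N (k + 1) ≤
      ∑ i, sphHeight (traj.lim k i) + traj.N k := by
  have h := sum_add_one_le_of_forall_exists_some (fun i => neg_one_le_sphHeight (traj.lim k i))
    (traj.cl_surj k hk) (P := fun v => sphHeight (traj.pos (k + 1) (traj.T (k + 1)) v))
    fun i v hiv => congrArg sphHeight (traj.cl_pos k hk i v hiv)
  simp only [sum_add_distrib, sum_const, card_univ, Fintype.card_fin, nsmul_eq_mul, mul_one] at h
  exact h

lemma two_le_N {k : ℕ} (hk : k < traj.m) : 2 ≤ traj.N k := by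
  obtain ⟨i, j, hij, -⟩ := traj.collide k hk
  exact Fin.nontrivial_iff_two_le.mp ⟨⟨i, j, hij⟩⟩

lemma N_ne_one {k : ℕ} (hk : k ≤ traj.m) : traj.N k ≠ 1 := by
  intro h1
  obtain ⟨i₀, hi₀⟩ := Fintype.card_eq_one_iff.mp (by simpa using h1 :
    Fintype.card (Fin (traj.N k)) = 1)
  have hsum := traj.deg_sum k hk
  rw [Fintype.sum_eq_single i₀ fun j hj => absurd (hi₀ j) hj] at hsum
  rcases traj.deg_pm k hk i₀ with h | h <;> omega

lemma lyapAt_le_succ {k : ℕ} (hk : k < traj.m) : traj.lyapAt k ≤ traj.lyapAt (k + 1) :=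
  calc traj.lyapAt k
      ≤ lyap (traj.N k) (traj.height k (traj.T k) * Real.exp (traj.T (k + 1) - traj.T k))
          (traj.T (k + 1)) :=
        lyap_le_lyap_mul_exp (traj.two_le_N hk) _ (traj.T_mono k hk).le
    _ ≤ traj.lyapAt (k + 1) := by
        rw [← traj.sum_sphHeight_lim hk, lyapAt, lyap, lyap]
        have := traj.height_succ_add_le hk
        exact mul_le_mul_of_nonneg_left (by linarith) (Real.exp_pos _).le

lemma lyapAt_zero_le {k : ℕ} (hk : k ≤ traj.m) : traj.lyapAt 0 ≤ traj.lyapAt k := by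
  induction k with
  | zero => exact le_rfl
  | succ k ih => exact (ih (by omega)).trans (traj.lyapAt_le_succ (by omega))

lemma lyapAt_le_lyap_last (hN : 2 ≤ traj.N traj.m) {t : ℝ} (ht : traj.T traj.m ≤ t) :
    traj.lyapAt traj.m ≤ lyap (traj.N traj.m) (traj.height traj.m t) t := by
  rw [traj.height_last_eq_mul_exp ht]
  exact lyap_le_lyap_mul_exp hN _ ht

end PVTrajectory

theorem annihilation_time_bound_general
    (n : ℕ) (hn : 1 ≤ n) (s : ℝ)
    (hcap : Real.sqrt (1 - s ^ 2) > ((n : ℝ) - 1) / n)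
    (κ : ℝ) (hκ : κ = n * Real.sqrt (1 - s ^ 2) - ((n : ℝ) - 1))
    (traj : PVTrajectory n)
    (hinit : ∀ i : Fin (traj.N 0),
      (‖traj.pos 0 0 i‖ ^ 2 - 1) / (1 + ‖traj.pos 0 0 i‖ ^ 2) ≤ -Real.sqrt (1 - s ^ 2)) :
    0 < κ ∧ κ ≤ 1 ∧ traj.N traj.m = 0 ∧
      ∀ k ≤ traj.m, traj.T k ≤ Real.log (1 / κ) := by
  set σ := Real.sqrt (1 - s ^ 2)
  have hσ1 : σ ≤ 1 := Real.sqrt_le_one.mpr (by nlinarith)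
  have hn0 : (0 : ℝ) < n := by exact_mod_cast hn
  have hκpos : 0 < κ := by linarith [(div_lt_iff₀ hn0).mp hcap]
  have hstart : 2 * κ ≤ traj.lyapAt 0 := by
    have hN0 : (traj.N 0 : ℝ) = 2 * n := by exact_mod_cast traj.N_zero
    have hH : traj.height 0 0 ≤ ∑ _i : Fin (traj.N 0), -σ := sum_le_sum fun i _ => hinit i
    simp only [sum_const, card_univ, Fintype.card_fin, nsmul_eq_mul, hN0] at hH
    simp only [PVTrajectory.lyapAt, lyap, traj.T_zero, neg_zero, Real.exp_zero, one_mul, hN0]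
    linarith
  have hlyap : ∀ k ≤ traj.m, 2 * κ ≤ traj.lyapAt k := fun k hk =>
    hstart.trans (traj.lyapAt_zero_le hk)
  have htime : ∀ k t, 2 * κ ≤ lyap (traj.N k) (traj.height k t) t → t ≤ Real.log (1 / κ) :=
    fun k t => le_log_inv_of_le_lyap hκpos (traj.neg_N_le_height k t)
  refine ⟨hκpos, by nlinarith, ?_, fun k hk => htime k _ (hlyap k hk)⟩
  by_contra hNm
  have hN2 : 2 ≤ traj.N traj.m := by have := traj.N_ne_one le_rfl; omega
  set t := max (traj.T traj.m) (Real.log (1 / κ)) + 1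
  have ht : traj.T traj.m ≤ t := by linarith [le_max_left (traj.T traj.m) (Real.log (1 / κ))]
  have := htime _ t ((hlyap _ le_rfl).trans (traj.lyapAt_le_lyap_last hN2 ht))
  linarith [le_max_right (traj.T traj.m) (Real.log (1 / κ))]

/-- Annihilation time estimate: under the clustering assumption, with
`κ = n√(1-s²) - (n-1) ∈ (0,1]`, all vortices have been annihilated by time `ln(1/κ)`:
every collision time is at most `ln(1/κ)` and no vortices remain after the last one. -/
theorem annihilation_time_bound
    (n : ℕ) (hn : 1 ≤ n) (s : ℝ) (hs0 : 0 ≤ s) (hs1 : s < 1)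
    (hcap : Real.sqrt (1 - s ^ 2) > ((n : ℝ) - 1) / n)
    (κ : ℝ) (hκ : κ = n * Real.sqrt (1 - s ^ 2) - ((n : ℝ) - 1))
    (traj : PVTrajectory n)
    (hinit : ∀ i : Fin (traj.N 0),
      (‖traj.pos 0 0 i‖ ^ 2 - 1) / (1 + ‖traj.pos 0 0 i‖ ^ 2) ≤ -Real.sqrt (1 - s ^ 2)) :
    0 < κ ∧ κ ≤ 1 ∧ traj.N traj.m = 0 ∧
      ∀ k ≤ traj.m, traj.T k ≤ Real.log (1 / κ) :=
  annihilation_time_bound_general n hn s hcap κ hκ traj hinit
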